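/- arXiv:1511.04207 — 5 statements merged into one kernel-verified Lean document; each statement's English description precedes it below -/
import Mathlib

section
/- Every d-regular connected finite simple graph (with d ≥ 1 and at least 2 vertices) has a spanning tree T containing a vertex v (called the root) such that at least d − 1 of the neighbours of v in T are leaves of T. -/
/-!
Among all edges `vu` of `G`, choose one for which `u` reaches as many vertices as possible once
every vertex of `N[v] \ {u}` is isolated. Maximality forces `u` to reach *all* vertices outside
`N[v] \ {u}`: otherwise a vertex `c` outside that component but next to some `w ∈ N(v) \ {u}`
yields the edge `cw`, for which the old component together with `v` is still reachable from `w`.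
Keeping the star at `v` and all edges avoiding `N[v] \ {u}` gives a connected subgraph in which
every vertex of `N(v) \ {u}` is adjacent to `v` only, so any spanning tree of it has these
`deg v - 1` vertices as leaves hanging at `v`.
-/

namespace SimpleGraph

variable {V : Type*} {G H : SimpleGraph V} {S T : Set V} {a c u v w x y z : V}

abbrev isolate (G : SimpleGraph V) (S : Set V) : SimpleGraph V where
  Adj a b := G.Adj a b ∧ a ∉ S ∧ b ∉ S
  symm := ⟨fun _ _ h => ⟨h.1.symm, h.2.2, h.2.1⟩⟩
  loopless := ⟨fun _ h => G.irrefl h.1⟩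

lemma Reachable.notMem_of_isolate (h : (G.isolate S).Reachable a x) (ha : a ∉ S) : x ∉ S := by
  obtain ⟨p⟩ := h.symm
  cases p with
  | nil => exact ha
  | cons hxy _ => exact hxy.2.1

lemma Reachable.isolate_of_forall_notMem (hT : ∀ x, (G.isolate S).Reachable a x → x ∉ T)
    (h : (G.isolate S).Reachable a z) : (G.isolate T).Reachable a z := by
  obtain ⟨p⟩ := h
  induction p with
  | nil => rfl
  | cons hab _ ih =>
    have hab' : (G.isolate T).Adj _ _ := ⟨hab.1, hT _ .rfl, hT _ hab.reachable⟩
    exact hab'.reachable.trans (ih fun x hx => hT x (hab.reachable.trans hx))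

lemma Connected.exists_adj_reachable_not_reachable (hG : G.Connected) (h : ¬ H.Reachable x u) :
    ∃ c w, G.Adj c w ∧ H.Reachable x c ∧ ¬ H.Reachable x w := by
  obtain ⟨p⟩ := hG x u
  obtain ⟨d, -, hd, hd'⟩ := p.exists_boundary_dart {y | H.Reachable x y} .rfl h
  exact ⟨d.fst, d.snd, d.adj, hd, hd'⟩

def closedNbhdExcept (G : SimpleGraph V) (v u : V) : Set V := insert v (G.neighborSet v) \ {u}

lemma notMem_closedNbhdExcept_right : u ∉ G.closedNbhdExcept v u := fun h => h.2 rfl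

def outerComponent (G : SimpleGraph V) (v u : V) : Set V :=
  {x | (G.isolate (G.closedNbhdExcept v u)).Reachable u x}

lemma notMem_closedNbhdExcept_of_mem_outerComponent (hx : x ∈ G.outerComponent v u) :
    x ∉ G.closedNbhdExcept v u :=
  Reachable.notMem_of_isolate hx notMem_closedNbhdExcept_right

lemma outerComponent_ssubset (hvu : G.Adj v u) (hcw : G.Adj c w) (hvw : G.Adj v w)
    (hc : c ∉ G.closedNbhdExcept v u) (hcC : c ∉ G.outerComponent v u) :
    G.outerComponent v u ⊂ G.outerComponent c w := by
  have hcu : c ≠ u := fun h => hcC (h ▸ .rfl)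
  have hvc : ¬ (c = v ∨ G.Adj c v) := fun h => hc ⟨h.imp id Adj.symm, hcu⟩
  have hv : v ∉ G.closedNbhdExcept c w := fun h => hvc (h.1.imp Eq.symm id)
  have hdisj : ∀ t ∈ G.outerComponent v u, t ∉ G.closedNbhdExcept c w := by
    rintro t ht ⟨rfl | hct, -⟩
    · exact hcC ht
    · exact hcC <| ht.trans
        (Adj.reachable ⟨hct.symm, notMem_closedNbhdExcept_of_mem_outerComponent ht, hc⟩)
  have hwv : (G.isolate (G.closedNbhdExcept c w)).Adj w v :=
    ⟨hvw.symm, notMem_closedNbhdExcept_right, hv⟩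
  have hvu' : (G.isolate (G.closedNbhdExcept c w)).Adj v u := ⟨hvu, hv, hdisj u .rfl⟩
  have hvC' : v ∈ G.outerComponent c w := hwv.reachable
  have hvC : v ∉ G.outerComponent v u := fun h =>
    notMem_closedNbhdExcept_of_mem_outerComponent h ⟨.inl rfl, hvu.ne⟩
  exact ⟨fun t ht =>
      (hvC'.trans hvu'.reachable).trans (Reachable.isolate_of_forall_notMem hdisj ht),
    fun h => hvC (h hvC')⟩

lemma Connected.exists_adj_subset_outerComponent [Finite V] (hG : G.Connected)
    (hE : ∃ v u, G.Adj v u) :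
    ∃ v u, G.Adj v u ∧ (G.closedNbhdExcept v u)ᶜ ⊆ G.outerComponent v u := by
  obtain ⟨v₀, u₀, h₀⟩ := hE
  obtain ⟨⟨v, u⟩, hvu, hmax⟩ := Set.exists_max_image {p : V × V | G.Adj p.1 p.2}
    (fun p => (G.outerComponent p.1 p.2).ncard) (Set.toFinite _) ⟨(v₀, u₀), h₀⟩
  refine ⟨v, u, hvu, fun x hx => by_contra fun hxC => ?_⟩
  obtain ⟨c, w, hcw, hxc, hxw⟩ := hG.exists_adj_reachable_not_reachable fun h => hxC h.symm
  have hc : c ∉ G.closedNbhdExcept v u := hxc.notMem_of_isolate hx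
  have hcC : c ∉ G.outerComponent v u := fun h => hxC (h.trans hxc.symm)
  have hw : w ∈ G.closedNbhdExcept v u :=
    by_contra fun hw => hxw (hxc.trans (Adj.reachable ⟨hcw, hc, hw⟩))
  obtain ⟨rfl | hvw, -⟩ := hw
  · exact hc ⟨.inr hcw.symm, fun h => hcC (h ▸ .rfl)⟩
  · have := Set.ncard_lt_ncard (outerComponent_ssubset hvu hcw hvw hc hcC) (Set.toFinite _)
    exact (hmax (c, w) hcw).not_gt this

abbrev hub (G : SimpleGraph V) (v u : V) : SimpleGraph V where
  Adj a b := G.Adj a b ∧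
    (a = v ∨ b = v ∨ a ∉ G.closedNbhdExcept v u ∧ b ∉ G.closedNbhdExcept v u)
  symm := ⟨fun _ _ h => ⟨h.1.symm, by tauto⟩⟩
  loopless := ⟨fun _ h => G.irrefl h.1⟩

lemma hub_le : G.hub v u ≤ G := fun _ _ h => h.1

lemma isolate_le_hub : G.isolate (G.closedNbhdExcept v u) ≤ G.hub v u :=
  fun _ _ h => ⟨h.1, .inr (.inr h.2)⟩

lemma eq_of_hub_adj (hvx : G.Adj v x) (hxu : x ≠ u) (h : (G.hub v u).Adj x y) : y = v := by
  obtain ⟨hxy, rfl | rfl | ⟨hx, -⟩⟩ := h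
  · exact (G.irrefl hvx).elim
  · rfl
  · exact absurd ⟨.inr hvx, hxu⟩ hx

lemma hub_connected (hvu : G.Adj v u) (hC : (G.closedNbhdExcept v u)ᶜ ⊆ G.outerComponent v u) :
    (G.hub v u).Connected := by
  refine (connected_iff_exists_forall_reachable _).2 ⟨v, fun x => ?_⟩
  by_cases hx : x ∈ G.closedNbhdExcept v u
  · obtain ⟨rfl | hvx, -⟩ := hx
    · rfl
    · exact Adj.reachable ⟨hvx, .inl rfl⟩
  · have hvu' : (G.hub v u).Adj v u := ⟨hvu, .inl rfl⟩
    exact hvu'.reachable.trans ((hC hx).mono isolate_le_hub)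

lemma Connected.neighborSet_eq_singleton (hG : G.Connected) (hxv : x ≠ v)
    (h : ∀ y, G.Adj x y → y = v) : G.neighborSet x = {v} := by
  obtain ⟨p⟩ := hG x v
  cases p with
  | nil => exact absurd rfl hxv
  | cons hxy _ => exact Set.eq_singleton_iff_unique_mem.2 ⟨h _ hxy ▸ hxy, h⟩

theorem Connected.exists_isTree_le_degree_sub_one_le_ncard_leaves [Finite V] (hG : G.Connected) :
    ∃ T ≤ G, T.IsTree ∧
      ∃ v, (G.neighborSet v).ncard - 1 ≤
        {u | T.Adj v u ∧ (T.neighborSet u).ncard = 1}.ncard := by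
  by_cases hE : ∃ v u, G.Adj v u
  · obtain ⟨v, u, hvu, hC⟩ := hG.exists_adj_subset_outerComponent hE
    obtain ⟨T, hTG, hT⟩ := (hub_connected hvu hC).exists_isTree_le
    refine ⟨T, hTG.trans hub_le, hT, v, ?_⟩
    have hleaves : G.neighborSet v \ {u} ⊆ {y | T.Adj v y ∧ (T.neighborSet y).ncard = 1} := by
      rintro x ⟨hvx, hxu⟩
      have hx := hT.connected.neighborSet_eq_singleton (G.ne_of_adj hvx).symm
        fun y hxy => eq_of_hub_adj hvx hxu (hTG hxy)
      exact ⟨(hx.symm ▸ rfl : v ∈ T.neighborSet x).symm, by rw [hx, Set.ncard_singleton]⟩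
    rw [← Set.ncard_sdiff_singleton_of_mem (show u ∈ G.neighborSet v from hvu)]
    exact Set.ncard_le_ncard hleaves (Set.toFinite _)
  · obtain ⟨T, hTG, hT⟩ := hG.exists_isTree_le
    refine ⟨T, hTG, hT, hG.nonempty.some, ?_⟩
    have : G.neighborSet hG.nonempty.some = ∅ :=
      Set.eq_empty_of_forall_notMem fun u h => hE ⟨_, u, h⟩
    simp [this]

end SimpleGraph

theorem stmt2_general {V : Type*} [Fintype V] (G : SimpleGraph V) (d : ℕ)
    (hreg : ∀ v : V, (G.neighborSet v).ncard = d) (hconn : G.Connected) :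
    ∃ T : SimpleGraph V, T ≤ G ∧ T.Connected ∧ T.IsAcyclic ∧
      ∃ v : V, d - 1 ≤ {u | T.Adj v u ∧ (T.neighborSet u).ncard = 1}.ncard := by
  obtain ⟨T, hTG, hT, v, hv⟩ := hconn.exists_isTree_le_degree_sub_one_le_ncard_leaves
  exact ⟨T, hTG, hT.connected, hT.isAcyclic, v, hreg v ▸ hv⟩

/-- Every `d`-regular connected graph (with `d ≥ 1` and at least two vertices) has a
spanning tree containing a vertex at least `d - 1` of whose tree-neighbours are leaves
of the tree. -/
theorem stmt2 {V : Type*} [Fintype V] (G : SimpleGraph V) (d : ℕ) (hd : 1 ≤ d)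
    (hcard : 2 ≤ Fintype.card V)
    (hreg : ∀ v : V, (G.neighborSet v).ncard = d) (hconn : G.Connected) :
    ∃ T : SimpleGraph V, T ≤ G ∧ T.Connected ∧ T.IsAcyclic ∧
      ∃ v : V, d - 1 ≤ {u | T.Adj v u ∧ (T.neighborSet u).ncard = 1}.ncard :=
  stmt2_general G d hreg hconn
end

section
/- Let G be a graph with maximum degree at most 5, let c be a partial acyclic colouring of G with 5 colours whose colour classes induce forests, and let v be an uncoloured vertex with at most 4 coloured neighbours. Then the colouring c can be modified (possibly recolouring some already-coloured vertices) and extended to v so that the result is again a partial acyclic 5-colouring whose colour classes induce forests, with domain enlarged by v. -/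
/-!
Recolouring a vertex `w` with colour `k` keeps the colouring good provided no two neighbours of
`w` of a common colour `j` are joined by a `k`–`j` path avoiding `w`, since a new cycle through
`w` would contain such a path. In particular a vertex whose coloured neighbours have distinct
colours can take any colour.

Suppose `v` cannot be coloured. Then for every colour `ℓ` some two equally coloured neighbours of
`v` both have an `ℓ`-coloured neighbour. Call a neighbour of `v` repeated if its colour occurs
twice around `v`; the repeated neighbours carry at least ten such colour incidences, while each
sees at most four colours, its neighbour `v` being uncoloured. So there are three or four of them,
and one, `y`, sees at least four, resp. three, colours. With three, `y` is rainbow and moves to a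
colour absent around `v`. With four, either `y` can move to another colour, or else, its coloured
neighbours repeating at most one colour, one of them, `p`, lies in every blocking pair at `y` and
so sees all five colours. Then `p` moves; if `p` is not adjacent to `v`, it takes a colour missing
around `y` instead, after which `y` moves. Each move lowers the number of repeated neighbours of
`v`, and induction on that number gives the theorem.
-/

/-- The subgraph of `G` consisting of edges with one endpoint coloured `i`
and the other coloured `j`. -/
def bicol {V α : Type*} (G : SimpleGraph V) (c : V → α) (i j : α) : SimpleGraph V where
  Adj u w := G.Adj u w ∧ ((c u = i ∧ c w = j) ∨ (c u = j ∧ c w = i))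
  symm := ⟨fun u w h => ⟨h.1.symm, h.2.symm.imp And.symm And.symm⟩⟩
  loopless := ⟨fun u h => G.irrefl h.1⟩

/-- A partial acyclic 5-colouring whose colour classes induce forests. -/
def pGood {V : Type*} (G : SimpleGraph V) (c : V → Option (Fin 5)) : Prop :=
  (∀ i : Fin 5, (G.induce {x | c x = some i}).IsAcyclic) ∧
  (∀ i j : Fin 5, i ≠ j →
    (bicol G c (some i) (some j)).IsAcyclic)

namespace SimpleGraph

variable {V : Type*} {H : SimpleGraph V}

theorem isAcyclic_of_isAcyclic_induce {s : Set V} (hs : ∀ ⦃a b⦄, H.Adj a b → b ∈ s)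
    (h : (H.induce s).IsAcyclic) : H.IsAcyclic := by
  intro u ρ hρ
  have hsupp : ∀ x ∈ ρ.support, x ∈ s := by
    intro x hx
    replace hx : x ∈ ρ.support.tail :=
      ((Walk.mem_support_iff ρ).1 hx).elim (· ▸ Walk.end_mem_tail_support hρ.not_nil) id
    rw [← Walk.map_snd_darts] at hx
    obtain ⟨d, -, rfl⟩ := List.mem_map.1 hx
    exact hs d.adj
  refine h (ρ.induce s hsupp) ((Walk.isCycle_map_iff_of_injective
    (f := (Embedding.induce s).toHom) Subtype.val_injective).1 ?_)
  rwa [Walk.map_induce]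

theorem Walk.edges_mem_edgeSet_deleteIncidenceSet {w x y : V} (r : H.Walk x y)
    (hr : w ∉ r.support) : ∀ e ∈ r.edges, e ∈ (H.deleteIncidenceSet w).edgeSet := by
  intro e he
  rw [edgeSet_deleteIncidenceSet]
  exact ⟨r.edges_subset_edgeSet he, fun hw => hr (r.mem_support_of_mem_edges he hw.2)⟩

theorem isAcyclic_of_deleteIncidenceSet {w : V} (hH : (H.deleteIncidenceSet w).IsAcyclic)
    (hw : ∀ x y, H.Adj w x → H.Adj w y → x ≠ y → ¬ (H.deleteIncidenceSet w).Reachable x y) :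
    H.IsAcyclic := by
  classical
  intro u ρ hρ
  by_cases hmem : w ∈ ρ.support
  · have hσ := hρ.rotate hmem
    generalize ρ.rotate w hmem = σ at hσ
    cases σ with
    | nil => exact hσ.not_nil Walk.Nil.nil
    | @cons _ x _ hwx q =>
      obtain ⟨hq, hwxq⟩ := (Walk.cons_isCycle_iff q hwx).1 hσ
      have hnil : ¬ q.reverse.Nil := fun h => hwx.ne h.eq
      set r := q.reverse.tail
      have hwr : w ∉ r.support := by
        have := (Walk.isPath_reverse_iff q).2 hq |>.support_nodup
        rw [← q.reverse.cons_support_tail hnil] at this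
        exact (List.nodup_cons.1 this).1
      have hsnd : s(w, q.reverse.snd) ∈ q.edges := by
        rw [← List.mem_reverse, ← Walk.edges_reverse]
        exact Walk.mk_start_snd_mem_edges hnil
      have hxy : x ≠ q.reverse.snd := by
        generalize q.reverse.snd = y at hsnd
        rintro rfl
        exact hwxq hsnd
      exact hw x _ hwx (Walk.adj_snd hnil) hxy
        ⟨(r.transfer _ (r.edges_mem_edgeSet_deleteIncidenceSet hwr)).reverse⟩
  · exact hH _ (hρ.transfer (ρ.edges_mem_edgeSet_deleteIncidenceSet hmem))

end SimpleGraph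

namespace PartialAcyclicColouring

open SimpleGraph Function

variable {V : Type*} {G : SimpleGraph V}

section Finite

open Finset

lemma exists_injOn_erase {α β : Type*} [DecidableEq α] [DecidableEq β] {s : Finset α}
    {f : α → β} (hs : s.Nonempty) (h : #s ≤ #(s.image f) + 1) :
    ∃ p ∈ s, Set.InjOn f (s.erase p) := by
  by_cases hinj : Set.InjOn f s
  · obtain ⟨p, hp⟩ := hs
    exact ⟨p, hp, hinj.mono (erase_subset p s)⟩
  obtain ⟨p, hp, q, hq, hpq, hne⟩ : ∃ p ∈ s, ∃ q ∈ s, f p = f q ∧ p ≠ q := by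
    simpa [Set.InjOn] using hinj
  refine ⟨p, hp, injOn_of_card_image_eq (card_image_le.antisymm ?_)⟩
  have himage : (s.erase p).image f = s.image f := by
    refine (image_subset_image (erase_subset p s)).antisymm fun b hb => ?_
    obtain ⟨x, hx, rfl⟩ := mem_image.1 hb
    by_cases hxp : x = p
    · exact mem_image.2 ⟨q, mem_erase.2 ⟨hne.symm, hq⟩, hxp ▸ hpq.symm⟩
    · exact mem_image.2 ⟨x, mem_erase.2 ⟨hxp, hx⟩, rfl⟩
  rw [himage, card_erase_of_mem hp]
  omega

lemma exists_some_notMem {α : Type*} [Fintype α] {t : Finset (Option α)}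
    (ht : #t < Fintype.card α) : ∃ a, some a ∉ t := by
  obtain ⟨o, ho, hot⟩ := exists_mem_notMem_of_card_lt_card (t := univ.map .some) (by simpa)
  obtain ⟨a, -, rfl⟩ := mem_map.1 ho
  exact ⟨a, hot⟩

lemma sum_lt_sum_of_eq_off_pair {ι : Type*} [Fintype ι] [DecidableEq ι] {f g : ι → ℕ}
    {m k : ι} (hmk : m ≠ k) (h : ∀ j, j ≠ m → j ≠ k → f j = g j)
    (hlt : f m + f k < g m + g k) : ∑ j, f j < ∑ j, g j := by
  have hk : k ∈ univ.erase m := mem_erase.2 ⟨hmk.symm, mem_univ k⟩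
  have hrest : ∑ j ∈ (univ.erase m).erase k, f j = ∑ j ∈ (univ.erase m).erase k, g j :=
    sum_congr rfl fun j hj => h j (ne_of_mem_erase (mem_of_mem_erase hj)) (ne_of_mem_erase hj)
  rw [← add_sum_erase _ f (mem_univ m), ← add_sum_erase _ f hk, ← add_sum_erase _ g (mem_univ m),
    ← add_sum_erase _ g hk]
  omega

lemma exists_eq_zero_of_sum_le_card {ι : Type*} [Fintype ι] [DecidableEq ι] {f : ι → ℕ}
    {a : ι} (ha : 2 ≤ f a) (h : ∑ i, f i ≤ Fintype.card ι) : ∃ k, f k = 0 := by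
  by_contra! hf
  have : ∑ i, (1 + if i = a then 1 else 0) ≤ ∑ i, f i := by
    refine sum_le_sum fun i _ => ?_
    split_ifs with hi
    · exact hi ▸ ha
    · exact Nat.one_le_iff_ne_zero.2 (hf i)
  simp only [sum_add_distrib, sum_const, card_univ, smul_eq_mul, mul_one, sum_ite_eq',
    mem_univ, if_true] at this
  omega

end Finite

@[simp] lemma bicol_adj {α : Type*} {c : V → α} {i j : α} {u w : V} :
    (bicol G c i j).Adj u w ↔ G.Adj u w ∧ ((c u = i ∧ c w = j) ∨ (c u = j ∧ c w = i)) :=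
  Iff.rfl

lemma bicol_comm {α : Type*} (c : V → α) (i j : α) : bicol G c i j = bicol G c j i := by
  ext
  simp only [bicol_adj]
  tauto

lemma induce_bicol_self {α : Type*} (c : V → α) (i : α) :
    (bicol G c i i).induce {x | c x = i} = G.induce {x | c x = i} := by
  ext ⟨a, ha⟩ ⟨b, hb⟩
  simp only [comap_adj, Embedding.coe_subtype, bicol_adj]
  exact ⟨And.left, fun h => ⟨h, .inl ⟨ha, hb⟩⟩⟩

theorem pGood_iff (c : V → Option (Fin 5)) :
    pGood G c ↔ ∀ i j : Fin 5, (bicol G c (some i) (some j)).IsAcyclic := by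
  have hself (i : Fin 5) : (G.induce {x | c x = some i}).IsAcyclic ↔
      (bicol G c (some i) (some i)).IsAcyclic := by
    rw [← induce_bicol_self]
    refine ⟨isAcyclic_of_isAcyclic_induce fun a b hab => ?_, fun h => h.induce _⟩
    rcases hab.2 with ⟨-, h⟩ | ⟨-, h⟩ <;> exact h
  refine ⟨fun ⟨h₁, h₂⟩ i j => ?_, fun h => ⟨fun i => (hself i).2 (h i i), fun i j _ => h i j⟩⟩
  rcases eq_or_ne i j with rfl | hij
  · exact (hself i).1 (h₁ i)
  · exact h₂ i j hij

-- For `j = k` this asks that `w` does not close a cycle in the colour class of `k`.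
def CanRecolour (G : SimpleGraph V) (c : V → Option (Fin 5)) (w : V) (k : Fin 5) : Prop :=
  ∀ (j : Fin 5) (p q : V), G.Adj w p → G.Adj w q → p ≠ q → c p = some j → c q = some j →
    ¬ ((bicol G c (some k) (some j)).deleteIncidenceSet w).Reachable p q

lemma deleteIncidenceSet_bicol_update {α : Type*} [DecidableEq V] (c : V → α) (w : V)
    (a i j : α) :
    (bicol G (update c w a) i j).deleteIncidenceSet w = (bicol G c i j).deleteIncidenceSet w := by
  ext x y
  simp only [deleteIncidenceSet_adj, bicol_adj]
  constructor <;> rintro ⟨h, hx, hy⟩ <;> simp_all [update_of_ne]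

theorem pGood_update [DecidableEq V] {c : V → Option (Fin 5)} {w : V} {k : Fin 5}
    (hc : pGood G c) (hk : CanRecolour G c w k) : pGood G (update c w (some k)) := by
  rw [pGood_iff] at hc ⊢
  intro i j
  apply isAcyclic_of_deleteIncidenceSet (w := w)
  · rw [deleteIncidenceSet_bicol_update]
    exact (hc i j).anti (deleteIncidenceSet_le _ _)
  · rintro x y ⟨hwx, hx⟩ ⟨hwy, hy⟩ hxy
    rw [deleteIncidenceSet_bicol_update]
    simp only [update_self, update_of_ne hwx.ne', update_of_ne hwy.ne', Option.some_inj] at hx hy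
    rcases hx with ⟨rfl, hxj⟩ | ⟨rfl, hxi⟩
    · have hyj : c y = some j := by rcases hy with ⟨-, h⟩ | ⟨rfl, h⟩ <;> exact h
      exact hk j x y hwx hwy hxy hxj hyj
    · have hyi : c y = some i := by rcases hy with ⟨rfl, h⟩ | ⟨-, h⟩ <;> exact h
      rw [bicol_comm]
      exact hk i x y hwx hwy hxy hxi hyi

lemma isSome_update {α : Type*} [DecidableEq V] {c : V → Option α} {w : V} (hw : (c w).isSome)
    (a : α) (x : V) : (update c w (some a) x).isSome = (c x).isSome := by
  by_cases hx : x = w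
  · subst hx
    simp [hw]
  · rw [update_of_ne hx]

section Counting

open Finset
open scoped Classical

variable [Fintype V] {c : V → Option (Fin 5)}

noncomputable def colouredNbrs (G : SimpleGraph V) (c : V → Option (Fin 5)) (y : V) : Finset V :=
  {x | G.Adj y x ∧ (c x).isSome}

noncomputable def nbrColours (G : SimpleGraph V) (c : V → Option (Fin 5)) (y : V) :
    Finset (Fin 5) :=
  {k | ∃ x, G.Adj y x ∧ c x = some k}

def IsRainbowAt (G : SimpleGraph V) (c : V → Option (Fin 5)) (y : V) : Prop :=
  Set.InjOn c (colouredNbrs G c y)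

@[simp] lemma mem_colouredNbrs {x y : V} : x ∈ colouredNbrs G c y ↔ G.Adj y x ∧ (c x).isSome := by
  simp [colouredNbrs]

@[simp] lemma mem_nbrColours {y : V} {k : Fin 5} :
    k ∈ nbrColours G c y ↔ ∃ x, G.Adj y x ∧ c x = some k := by
  simp [nbrColours]

lemma colouredNbrs_congr {c₁ : V → Option (Fin 5)} (h : ∀ x, (c₁ x).isSome = (c x).isSome)
    (y : V) : colouredNbrs G c₁ y = colouredNbrs G c y := by
  ext x
  simp [h x]

theorem IsRainbowAt.canRecolour {w : V} (h : IsRainbowAt G c w) (k : Fin 5) :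
    CanRecolour G c w k := by
  intro j p q hp hq hpq hcp hcq _
  exact hpq (h (by simp [hp, hcp]) (by simp [hq, hcq]) (hcp.trans hcq.symm))

lemma card_nbrColours_le (y : V) : #(nbrColours G c y) ≤ #((colouredNbrs G c y).image c) := by
  refine card_le_card_of_injOn some (fun k hk => ?_) (Option.some_injective _).injOn
  obtain ⟨x, hx, hxk⟩ := mem_nbrColours.1 hk
  exact mem_image.2 ⟨x, by simp [hx, hxk], hxk⟩

lemma isRainbowAt_of_card_le {y : V} (h : #(colouredNbrs G c y) ≤ #(nbrColours G c y)) :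
    IsRainbowAt G c y :=
  injOn_of_card_image_eq (card_image_le.antisymm (h.trans (card_nbrColours_le y)))

lemma card_le_five_of_forall_adj (hΔ : ∀ w : V, (G.neighborSet w).ncard ≤ 5) {y : V}
    {S : Finset V} (hS : ∀ x ∈ S, G.Adj y x) : #S ≤ 5 :=
  calc #S = (S : Set V).ncard := (Set.ncard_coe_finset S).symm
    _ ≤ (G.neighborSet y).ncard := Set.ncard_le_ncard hS
    _ ≤ 5 := hΔ y

lemma card_colouredNbrs_le_four (hΔ : ∀ w : V, (G.neighborSet w).ncard ≤ 5) {v y : V}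
    (hvy : G.Adj y v) (hv : c v = none) : #(colouredNbrs G c y) ≤ 4 := by
  have hnot : v ∉ colouredNbrs G c y := by simp [hv]
  have := card_le_five_of_forall_adj hΔ (S := insert v (colouredNbrs G c y)) (by
    simp only [mem_insert, mem_colouredNbrs]
    rintro x (rfl | ⟨hx, -⟩) <;> assumption)
  rw [card_insert_of_notMem hnot] at this
  omega

lemma isRainbowAt_of_forall_mem_nbrColours (hΔ : ∀ w : V, (G.neighborSet w).ncard ≤ 5) {y : V}
    (h : ∀ k, k ∈ nbrColours G c y) : IsRainbowAt G c y := by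
  refine isRainbowAt_of_card_le ?_
  rw [eq_univ_of_forall h, card_univ, Fintype.card_fin]
  exact card_le_five_of_forall_adj hΔ fun x hx => (mem_colouredNbrs.1 hx).1

lemma isRainbowAt_update_of_injOn_erase {y p : V} {ℓ : Fin 5} (hp : p ∈ colouredNbrs G c y)
    (hinj : Set.InjOn c ((colouredNbrs G c y).erase p))
    (hℓ : some ℓ ∉ ((colouredNbrs G c y).erase p).image c) :
    IsRainbowAt G (update c p (some ℓ)) y := by
  have heq : Set.EqOn c (update c p (some ℓ)) ((colouredNbrs G c y).erase p) :=
    fun x hx => (update_of_ne (ne_of_mem_erase hx) _ _).symm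
  rw [IsRainbowAt, colouredNbrs_congr (isSome_update (mem_colouredNbrs.1 hp).2 ℓ),
    ← insert_erase hp, coe_insert, Set.injOn_insert (by simp)]
  refine ⟨hinj.congr heq, ?_⟩
  rw [← heq.image_eq, update_self]
  exact fun ⟨x, hx, hxℓ⟩ => hℓ (mem_image.2 ⟨x, hx, hxℓ⟩)

lemma mem_nbrColours_of_reachable {w p q : V} {j k : Fin 5}
    (h : ((bicol G c (some k) (some j)).deleteIncidenceSet w).Reachable p q) (hpq : p ≠ q)
    (hp : c p = some j) : k ∈ nbrColours G c p := by
  obtain ⟨r⟩ := h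
  cases r with
  | nil => exact absurd rfl hpq
  | @cons _ x _ hpx _ =>
    obtain ⟨hadj, hcol⟩ := deleteIncidenceSet_le _ _ hpx
    rw [mem_nbrColours]
    rcases hcol with ⟨hk, hx⟩ | ⟨-, hx⟩
    · exact ⟨x, hadj, hx.trans (hp.symm.trans hk)⟩
    · exact ⟨x, hadj, hx⟩

theorem exists_pair_of_not_canRecolour {w : V} {k : Fin 5} (h : ¬ CanRecolour G c w k) :
    ∃ j p q, G.Adj w p ∧ G.Adj w q ∧ p ≠ q ∧ c p = some j ∧ c q = some j ∧
      k ∈ nbrColours G c p ∧ k ∈ nbrColours G c q := by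
  simp only [CanRecolour, not_forall, not_not] at h
  obtain ⟨j, p, q, hp, hq, hpq, hcp, hcq, hreach⟩ := h
  exact ⟨j, p, q, hp, hq, hpq, hcp, hcq, mem_nbrColours_of_reachable hreach hpq hcp,
    mem_nbrColours_of_reachable hreach.symm hpq.symm hcq⟩

lemma forall_mem_nbrColours_of_injOn_erase {y p : V} {a : Fin 5} (hy : c y = some a)
    (hbad : ∀ k, k ≠ a → ¬ CanRecolour G c y k) (hp : p ∈ colouredNbrs G c y)
    (hinj : Set.InjOn c ((colouredNbrs G c y).erase p)) (k : Fin 5) : k ∈ nbrColours G c p := by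
  by_cases hka : k = a
  · exact mem_nbrColours.2 ⟨y, (mem_colouredNbrs.1 hp).1.symm, hka ▸ hy⟩
  obtain ⟨j, q₁, q₂, hq₁, hq₂, hne, hc₁, hc₂, hk₁, hk₂⟩ :=
    exists_pair_of_not_canRecolour (hbad k hka)
  by_contra hkp
  have h₁ : q₁ ∈ (colouredNbrs G c y).erase p :=
    mem_erase.2 ⟨fun h => hkp (h ▸ hk₁), by simp [hq₁, hc₁]⟩
  have h₂ : q₂ ∈ (colouredNbrs G c y).erase p :=
    mem_erase.2 ⟨fun h => hkp (h ▸ hk₂), by simp [hq₂, hc₂]⟩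
  exact hne (hinj h₁ h₂ (hc₁.trans hc₂.symm))

theorem exists_ten_le_card_mul_card_nbrColours {T : Finset V}
    (hT : ∀ ℓ, ∃ p ∈ T, ∃ q ∈ T, p ≠ q ∧ ℓ ∈ nbrColours G c p ∧ ℓ ∈ nbrColours G c q) :
    ∃ y ∈ T, 10 ≤ #T * #(nbrColours G c y) := by
  obtain ⟨p, hp, -⟩ := hT 0
  have hcount : ∑ y ∈ T, #(nbrColours G c y) = ∑ ℓ, #{y ∈ T | ℓ ∈ nbrColours G c y} := by
    convert sum_card_bipartiteAbove_eq_sum_card_bipartiteBelow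
      (fun y ℓ => ℓ ∈ nbrColours G c y) (s := T) (t := univ) using 3
    · ext
      simp [bipartiteAbove]
    · rfl
  have htwo (ℓ : Fin 5) : 2 ≤ #{y ∈ T | ℓ ∈ nbrColours G c y} := by
    obtain ⟨p, hp, q, hq, hpq, hpℓ, hqℓ⟩ := hT ℓ
    exact one_lt_card.2 ⟨p, mem_filter.2 ⟨hp, hpℓ⟩, q, mem_filter.2 ⟨hq, hqℓ⟩, hpq⟩
  refine exists_le_of_sum_le ⟨p, hp⟩ ?_
  calc ∑ _y ∈ T, 10 = #T * ∑ _ℓ : Fin 5, 2 := by simp [mul_comm]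
    _ ≤ #T * ∑ ℓ, #{y ∈ T | ℓ ∈ nbrColours G c y} := by gcongr with ℓ; exact htwo ℓ
    _ = ∑ y ∈ T, #T * #(nbrColours G c y) := by rw [← hcount, mul_sum]

noncomputable def nbrsOfColour (G : SimpleGraph V) (c : V → Option (Fin 5)) (v : V)
    (j : Fin 5) : Finset V :=
  {u | G.Adj v u ∧ c u = some j}

noncomputable def repeatedNbrs (G : SimpleGraph V) (c : V → Option (Fin 5)) (v : V) :
    Finset V :=
  ({j | 2 ≤ #(nbrsOfColour G c v j)} : Finset (Fin 5)).biUnion (nbrsOfColour G c v)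

variable {v : V}

@[simp] lemma mem_nbrsOfColour {u : V} {j : Fin 5} :
    u ∈ nbrsOfColour G c v j ↔ G.Adj v u ∧ c u = some j := by
  simp [nbrsOfColour]

lemma notMem_nbrsOfColour {u : V} {j m : Fin 5} (hu : u ∈ nbrsOfColour G c v m) (hjm : j ≠ m) :
    u ∉ nbrsOfColour G c v j := fun h =>
  hjm (Option.some_injective _ ((mem_nbrsOfColour.1 h).2.symm.trans (mem_nbrsOfColour.1 hu).2))

lemma pairwiseDisjoint_nbrsOfColour (s : Set (Fin 5)) :
    s.PairwiseDisjoint (nbrsOfColour G c v) :=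
  fun _ _ _ _ hij => disjoint_left.2 fun _ hi hj => notMem_nbrsOfColour hi hij.symm hj

lemma card_repeatedNbrs : #(repeatedNbrs G c v) =
    ∑ j, if 2 ≤ #(nbrsOfColour G c v j) then #(nbrsOfColour G c v j) else 0 := by
  rw [repeatedNbrs, card_biUnion (pairwiseDisjoint_nbrsOfColour _), sum_filter]

lemma card_repeatedNbrs_le_sum : #(repeatedNbrs G c v) ≤ ∑ j, #(nbrsOfColour G c v j) := by
  rw [card_repeatedNbrs]
  exact sum_le_sum fun j _ => by split_ifs <;> omega

lemma sum_card_nbrsOfColour_le (hn : {u | G.Adj v u ∧ (c u).isSome}.ncard ≤ 4) :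
    ∑ j, #(nbrsOfColour G c v j) ≤ 4 := by
  rw [← card_biUnion (pairwiseDisjoint_nbrsOfColour _), ← Set.ncard_coe_finset]
  refine le_trans (Set.ncard_le_ncard fun u hu => ?_) hn
  obtain ⟨j, -, hj⟩ := mem_biUnion.1 hu
  obtain ⟨hvu, hcu⟩ := mem_nbrsOfColour.1 hj
  exact ⟨hvu, by simp [hcu]⟩

lemma mem_repeatedNbrs {p q : V} {j : Fin 5} (hp : p ∈ nbrsOfColour G c v j)
    (hq : q ∈ nbrsOfColour G c v j) (hpq : p ≠ q) : p ∈ repeatedNbrs G c v :=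
  mem_biUnion.2 ⟨j, mem_filter.2 ⟨mem_univ j, one_lt_card.2 ⟨p, hp, q, hq, hpq⟩⟩, hp⟩

lemma forall_exists_pair_mem_repeatedNbrs (hbad : ∀ ℓ, ¬ CanRecolour G c v ℓ) (ℓ : Fin 5) :
    ∃ p ∈ repeatedNbrs G c v, ∃ q ∈ repeatedNbrs G c v,
      p ≠ q ∧ ℓ ∈ nbrColours G c p ∧ ℓ ∈ nbrColours G c q := by
  obtain ⟨j, p, q, hp, hq, hpq, hcp, hcq, hpℓ, hqℓ⟩ := exists_pair_of_not_canRecolour (hbad ℓ)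
  have hpj : p ∈ nbrsOfColour G c v j := mem_nbrsOfColour.2 ⟨hp, hcp⟩
  have hqj : q ∈ nbrsOfColour G c v j := mem_nbrsOfColour.2 ⟨hq, hcq⟩
  exact ⟨p, mem_repeatedNbrs hpj hqj hpq, q, mem_repeatedNbrs hqj hpj hpq.symm, hpq, hpℓ, hqℓ⟩

lemma nbrsOfColour_congr {c₁ : V → Option (Fin 5)} (h : ∀ x, G.Adj v x → c₁ x = c x) :
    nbrsOfColour G c₁ v = nbrsOfColour G c v := by
  ext j x
  simp only [mem_nbrsOfColour]
  exact and_congr_right fun hx => by rw [h x hx]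

lemma nbrsOfColour_update {u : V} (hvu : G.Adj v u) (k j : Fin 5) :
    nbrsOfColour G (update c u (some k)) v j =
      if j = k then insert u (nbrsOfColour G c v j) else (nbrsOfColour G c v j).erase u := by
  ext x
  by_cases hxu : x = u
  · subst hxu
    split_ifs with hjk
    · simp [hvu, hjk]
    · simp [hvu, Ne.symm hjk]
  · split_ifs <;> simp [hxu, update_of_ne]

theorem card_repeatedNbrs_lt_of_eqOn_update {c₁ : V → Option (Fin 5)} {u : V} {m k : Fin 5}
    (hc₁ : ∀ x, G.Adj v x → c₁ x = update c u (some k) x) (hu : u ∈ nbrsOfColour G c v m)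
    (hkm : k ≠ m) (hm : 2 ≤ #(nbrsOfColour G c v m)) (hk : #(nbrsOfColour G c v k) ≠ 1)
    (hmk : #(nbrsOfColour G c v m) + #(nbrsOfColour G c v k) ≤ 4) :
    #(repeatedNbrs G c₁ v) < #(repeatedNbrs G c v) := by
  have hB := nbrsOfColour_update (c := c) (mem_nbrsOfColour.1 hu).1 k
  have hBm : #(nbrsOfColour G c₁ v m) = #(nbrsOfColour G c v m) - 1 := by
    rw [nbrsOfColour_congr hc₁, hB, if_neg hkm.symm, card_erase_of_mem hu]
  have hBk : #(nbrsOfColour G c₁ v k) = #(nbrsOfColour G c v k) + 1 := by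
    rw [nbrsOfColour_congr hc₁, hB, if_pos rfl, card_insert_of_notMem (notMem_nbrsOfColour hu hkm)]
  rw [card_repeatedNbrs, card_repeatedNbrs]
  refine sum_lt_sum_of_eq_off_pair hkm.symm (fun j hjm hjk => ?_) ?_
  · rw [nbrsOfColour_congr hc₁, hB, if_neg hjk,
      erase_eq_of_notMem (notMem_nbrsOfColour hu hjm)]
  · rw [hBm, hBk]
    split_ifs <;> omega

lemma card_nbrsOfColour_ne_one (h : ∑ j, #(nbrsOfColour G c v j) ≤ #(repeatedNbrs G c v))
    (j : Fin 5) : #(nbrsOfColour G c v j) ≠ 1 := by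
  have hle (i : Fin 5) (_ : i ∈ univ) : (if 2 ≤ #(nbrsOfColour G c v i)
      then #(nbrsOfColour G c v i) else 0) ≤ #(nbrsOfColour G c v i) := by
    split_ifs <;> omega
  have := (sum_eq_sum_iff_of_le hle).1
    (by rw [← card_repeatedNbrs]; exact card_repeatedNbrs_le_sum.antisymm h) j (mem_univ j)
  intro h1
  simp [h1] at this

def IsNbrRecolouring (G : SimpleGraph V) (c c₁ : V → Option (Fin 5)) (v : V) : Prop :=
  pGood G c₁ ∧ (∀ x, (c₁ x).isSome = (c x).isSome) ∧
    ∃ u m k, u ∈ nbrsOfColour G c v m ∧ k ≠ m ∧ ∀ x, G.Adj v x → c₁ x = update c u (some k) x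

lemma isNbrRecolouring_update (hc : pGood G c) {u : V} {m k : Fin 5}
    (hu : u ∈ nbrsOfColour G c v m) (hkm : k ≠ m) (hk : CanRecolour G c u k) :
    IsNbrRecolouring G c (update c u (some k)) v :=
  ⟨pGood_update hc hk, isSome_update (by simp [(mem_nbrsOfColour.1 hu).2]) k,
    u, m, k, hu, hkm, fun _ _ => rfl⟩

lemma IsNbrRecolouring.of_eqOn {c' c₁ : V → Option (Fin 5)} (h : IsNbrRecolouring G c' c₁ v)
    (hdom : ∀ x, (c' x).isSome = (c x).isSome) (hc' : ∀ x, G.Adj v x → c' x = c x) :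
    IsNbrRecolouring G c c₁ v := by
  obtain ⟨hc₁, hdom₁, u, m, k, hu, hkm, hagree⟩ := h
  refine ⟨hc₁, fun x => (hdom₁ x).trans (hdom x), u, m, k, nbrsOfColour_congr hc' ▸ hu, hkm,
    fun x hx => ?_⟩
  rw [hagree x hx]
  by_cases hxu : x = u
  · simp [hxu]
  · rw [update_of_ne hxu, update_of_ne hxu, hc' x hx]

lemma IsNbrRecolouring.card_repeatedNbrs_lt {c₁ : V → Option (Fin 5)}
    (h : IsNbrRecolouring G c c₁ v) (hsum : ∑ j, #(nbrsOfColour G c v j) ≤ 4)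
    (hfull : ∑ j, #(nbrsOfColour G c v j) ≤ #(repeatedNbrs G c v)) :
    #(repeatedNbrs G c₁ v) < #(repeatedNbrs G c v) := by
  obtain ⟨-, -, u, m, k, hu, hkm, hagree⟩ := h
  have hm := card_nbrsOfColour_ne_one hfull m
  have := card_pos.2 ⟨u, hu⟩
  exact card_repeatedNbrs_lt_of_eqOn_update hagree hu hkm (by omega)
    (card_nbrsOfColour_ne_one hfull k)
    ((add_le_sum (f := fun j => #(nbrsOfColour G c v j)) (fun j _ => Nat.zero_le _)
      (mem_univ m) (mem_univ k) hkm.symm).trans hsum)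

theorem exists_card_repeatedNbrs_lt_of_isRainbowAt (hc : pGood G c)
    (hsum : ∑ j, #(nbrsOfColour G c v j) ≤ 4) {y : V} {a : Fin 5}
    (hy : y ∈ nbrsOfColour G c v a) (ha : 2 ≤ #(nbrsOfColour G c v a)) (hyr : IsRainbowAt G c y) :
    ∃ c₁, pGood G c₁ ∧ (∀ x, (c₁ x).isSome = (c x).isSome) ∧
      #(repeatedNbrs G c₁ v) < #(repeatedNbrs G c v) := by
  obtain ⟨k, hk⟩ := exists_eq_zero_of_sum_le_card (f := fun j => #(nbrsOfColour G c v j)) ha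
    (by rw [Fintype.card_fin]; omega)
  have hka : k ≠ a := by rintro rfl; omega
  have := single_le_sum (f := fun j => #(nbrsOfColour G c v j)) (fun j _ => Nat.zero_le _)
    (mem_univ a)
  obtain ⟨hc₁, hdom, -⟩ := isNbrRecolouring_update hc hy hka (hyr.canRecolour k)
  exact ⟨_, hc₁, hdom,
    card_repeatedNbrs_lt_of_eqOn_update (fun _ _ => rfl) hy hka ha (by omega) (by omega)⟩

theorem exists_isNbrRecolouring (hΔ : ∀ w : V, (G.neighborSet w).ncard ≤ 5) (hc : pGood G c)
    (hv : c v = none) {y : V} {a : Fin 5} (hy : y ∈ nbrsOfColour G c v a)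
    (hrep : #(colouredNbrs G c y) ≤ #(nbrColours G c y) + 1) :
    ∃ c₁, IsNbrRecolouring G c c₁ v := by
  obtain ⟨hvy, hcy⟩ := mem_nbrsOfColour.1 hy
  by_cases hgood : ∃ k, k ≠ a ∧ CanRecolour G c y k
  · obtain ⟨k, hka, hk⟩ := hgood
    exact ⟨_, isNbrRecolouring_update hc hy hka hk⟩
  push Not at hgood
  set s := colouredNbrs G c y
  obtain ⟨k, hka⟩ := exists_ne a
  have hs : s.Nonempty := by
    obtain ⟨j, q, -, hq, -, -, hcq, -⟩ := exists_pair_of_not_canRecolour (hgood k hka)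
    exact ⟨q, by simp [s, hq, hcq]⟩
  obtain ⟨p, hps, hinj⟩ :=
    exists_injOn_erase hs (hrep.trans (Nat.add_le_add_right (card_nbrColours_le y) 1))
  obtain ⟨hyp, hpc⟩ := mem_colouredNbrs.1 hps
  have hpr : IsRainbowAt G c p := isRainbowAt_of_forall_mem_nbrColours hΔ
    (forall_mem_nbrColours_of_injOn_erase hcy hgood hps hinj)
  by_cases hvp : G.Adj v p
  · obtain ⟨m, hm⟩ := Option.isSome_iff_exists.1 hpc
    obtain ⟨k, hkm⟩ := exists_ne m
    exact ⟨_, isNbrRecolouring_update hc (mem_nbrsOfColour.2 ⟨hvp, hm⟩) hkm (hpr.canRecolour k)⟩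
  -- otherwise give `p` a colour missing around `y`, which makes `y` rainbow
  obtain ⟨ℓ, hℓ⟩ := exists_some_notMem (t := (s.erase p).image c) (by
    have : #s ≤ 4 := card_colouredNbrs_le_four hΔ hvy.symm hv
    have := card_erase_of_mem hps
    have := card_image_le (s := s.erase p) (f := c)
    rw [Fintype.card_fin]
    omega)
  have hagree (x : V) (hx : G.Adj v x) : update c p (some ℓ) x = c x :=
    update_of_ne (by rintro rfl; exact hvp hx) _ _
  refine ⟨_, (isNbrRecolouring_update (pGood_update hc (hpr.canRecolour ℓ))
    (mem_nbrsOfColour.2 ⟨hvy, (hagree y hvy).trans hcy⟩) hka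
    ((isRainbowAt_update_of_injOn_erase hps hinj hℓ).canRecolour k)).of_eqOn
    (isSome_update hpc ℓ) hagree⟩

theorem exists_card_repeatedNbrs_lt (hΔ : ∀ w : V, (G.neighborSet w).ncard ≤ 5)
    (hc : pGood G c) (hv : c v = none) (hn : {u | G.Adj v u ∧ (c u).isSome}.ncard ≤ 4)
    (hbad : ∀ ℓ, ¬ CanRecolour G c v ℓ) :
    ∃ c₁, pGood G c₁ ∧ (∀ x, (c₁ x).isSome = (c x).isSome) ∧
      #(repeatedNbrs G c₁ v) < #(repeatedNbrs G c v) := by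
  have hsum := sum_card_nbrsOfColour_le hn
  have hR : #(repeatedNbrs G c v) ≤ ∑ j, #(nbrsOfColour G c v j) := card_repeatedNbrs_le_sum
  obtain ⟨y, hyR, hy⟩ :=
    exists_ten_le_card_mul_card_nbrColours (forall_exists_pair_mem_repeatedNbrs hbad)
  obtain ⟨a, ha, hya⟩ : ∃ a, 2 ≤ #(nbrsOfColour G c v a) ∧ y ∈ nbrsOfColour G c v a := by
    simpa [repeatedNbrs] using hyR
  have hy₄ := card_colouredNbrs_le_four hΔ (mem_nbrsOfColour.1 hya).1.symm hv
  have hyc : #(nbrColours G c y) ≤ #(colouredNbrs G c y) :=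
    (card_nbrColours_le y).trans card_image_le
  have := Nat.mul_le_mul_left #(repeatedNbrs G c v) (hyc.trans hy₄)
  rcases (show #(repeatedNbrs G c v) = 3 ∨ #(repeatedNbrs G c v) = 4 by omega) with h3 | h4
  · rw [h3] at hy
    exact exists_card_repeatedNbrs_lt_of_isRainbowAt hc hsum hya ha
      (isRainbowAt_of_card_le (by omega))
  · rw [h4] at hy
    obtain ⟨c₁, h⟩ := exists_isNbrRecolouring hΔ hc hv hya (by omega)
    exact ⟨c₁, h.1, h.2.1, h.card_repeatedNbrs_lt hsum (by omega)⟩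

end Counting

end PartialAcyclicColouring

open PartialAcyclicColouring Finset Function

/-- Extension lemma: a partial acyclic 5-colouring with forest colour classes of a graph of
maximum degree at most 5 can be modified and extended to any uncoloured vertex with at most
4 coloured neighbours. -/
theorem stmt4 {V : Type*} [Fintype V] (G : SimpleGraph V)
    (hΔ : ∀ w : V, (G.neighborSet w).ncard ≤ 5)
    (c : V → Option (Fin 5)) (hc : pGood G c)
    (v : V) (hv : c v = none)
    (hn : {u | G.Adj v u ∧ (c u).isSome}.ncard ≤ 4) :
    ∃ c' : V → Option (Fin 5), pGood G c' ∧
      ∀ u : V, (c' u).isSome ↔ ((c u).isSome ∨ u = v) := by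
  classical
  induction hR : #(repeatedNbrs G c v) using Nat.strong_induction_on generalizing c with
  | _ n ih =>
  by_cases hgood : ∃ ℓ, CanRecolour G c v ℓ
  · obtain ⟨ℓ, hℓ⟩ := hgood
    refine ⟨update c v (some ℓ), pGood_update hc hℓ, fun u => ?_⟩
    by_cases hu : u = v <;> simp [hu]
  push Not at hgood
  obtain ⟨c₁, hc₁, hdom, hlt⟩ := exists_card_repeatedNbrs_lt hΔ hc hv hn hgood
  obtain ⟨c', hc', hext⟩ := ih _ (hR ▸ hlt) c₁ hc₁ (by simpa [hv] using hdom v)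
    (by simpa [hdom] using hn) rfl
  exact ⟨c', hc', fun u => by rw [hext, hdom]⟩
end

section
/- Let G be a graph with maximum degree at most 5, let c be a partial acyclic 5-colouring with forest colour classes, and let v be an uncoloured vertex whose coloured neighbours include exactly two vertices x, y of the same colour (all other coloured neighbours, if any, having pairwise distinct colours different from c(x)). If v cannot be assigned any of the 5 colours without creating an alternating bichromatic cycle or a monochromatic cycle through v, then the vertex x has at least 5 coloured neighbours with pairwise-relevant colours, contradicting deg(x) ≤ 5 with x adjacent to the uncoloured vertex v. Hence v can always be coloured in this situation. -/
namespace SimpleGraph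

variable {V : Type*} {G : SimpleGraph V}

theorem Walk.IsCycle.induce {s : Set V} {u : V} {p : G.Walk u u} (hp : p.IsCycle)
    (hs : ∀ t ∈ p.support, t ∈ s) : (p.induce s hs).IsCycle := by
  refine (isCycle_map_iff_of_injective (f := (Embedding.induce s).toHom)
    Subtype.val_injective).1 ?_
  rwa [Walk.map_induce]

theorem IsAcyclic.of_induce {s : Set V} (hs : G.support ⊆ s) (h : (G.induce s).IsAcyclic) :
    G.IsAcyclic := by
  intro u p hp
  refine h _ (hp.induce fun t ht => hs ?_)
  obtain ⟨e, he, hte⟩ := (Walk.mem_support_iff_exists_mem_edges_of_not_nil hp.not_nil).1 ht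
  induction e using Sym2.ind with
  | h a b =>
    have hab : G.Adj a b := p.adj_of_mem_edges he
    rcases Sym2.mem_iff.1 hte with rfl | rfl
    exacts [hab.mem_support_left, hab.mem_support_right]

theorem exists_isCycle_of_not_isAcyclic_of_induce_compl {v : V} (hnac : ¬ G.IsAcyclic)
    (hac : (G.induce {v}ᶜ).IsAcyclic) : ∃ p : G.Walk v v, p.IsCycle := by
  classical
  simp only [IsAcyclic, not_forall, not_not] at hnac
  obtain ⟨u, p, hp⟩ := hnac
  by_cases hv : v ∈ p.support
  · exact ⟨p.rotate v hv, hp.rotate hv⟩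
  · exact (hac _ (hp.induce fun t ht (htv : t = v) => hv (htv ▸ ht))).elim

theorem Walk.IsCycle.exists_adj_snd_ne {v : V} {p : G.Walk v v} (hp : p.IsCycle) :
    ∃ z, z ≠ v ∧ G.Adj p.snd z := by
  have hlen := hp.three_le_length
  refine ⟨p.getVert 2, fun h => ?_, p.adj_getVert_succ (by omega)⟩
  rcases (hp.getVert_endpoint_iff (by omega)).1 h with h | h <;> omega

end SimpleGraph

section Colouring

open SimpleGraph Function

variable {V α : Type*} {G : SimpleGraph V}

theorem bicol_colour_eq_of_adj_of_adj {c : V → α} {i j : α} {u w z : V}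
    (hw : (bicol G c i j).Adj u w) (hz : (bicol G c i j).Adj u z) : c w = c z := by
  obtain ⟨-, hw⟩ := hw
  obtain ⟨-, hz⟩ := hz
  grind

theorem isAcyclic_induce_iff_bicol (c : V → α) (i : α) :
    (G.induce {x | c x = i}).IsAcyclic ↔ (bicol G c i i).IsAcyclic := by
  refine ⟨fun h => IsAcyclic.of_induce (s := {x | c x = i}) ?_ ?_, fun h => ?_⟩
  · rintro u ⟨w, -, hu | hu⟩ <;> exact hu.1
  · exact h.comap ⟨id, fun hab => hab.1⟩ injective_id
  · let f : G.induce {x | c x = i} →g bicol G c i i :=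
      ⟨Subtype.val, fun {a b} hab => ⟨hab, Or.inl ⟨a.2, b.2⟩⟩⟩
    exact h.comap f Subtype.val_injective

theorem induce_compl_bicol_update [DecidableEq V] (c : V → α) (v : V) (β i j : α) :
    (bicol G (update c v β) i j).induce {v}ᶜ = (bicol G c i j).induce {v}ᶜ := by
  ext ⟨a, ha⟩ ⟨b, hb⟩
  simp [bicol, update_of_ne (Set.mem_compl_singleton_iff.1 ha),
    update_of_ne (Set.mem_compl_singleton_iff.1 hb)]

theorem pGood_iff {c : V → Option (Fin 5)} :
    pGood G c ↔ ∀ i j : Fin 5, (bicol G c (some i) (some j)).IsAcyclic := by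
  refine ⟨fun h i j => ?_, fun h => ⟨fun i => (isAcyclic_induce_iff_bicol c _).2 (h i i),
    fun i j _ => h i j⟩⟩
  obtain rfl | hij := eq_or_ne i j
  exacts [(isAcyclic_induce_iff_bicol c _).1 (h.1 i), h.2 i j hij]

theorem exists_adj_snd_colour_of_isCycle [DecidableEq V] {c : V → α} {v : V}
    {γ i j : α} {p : (bicol G (update c v γ) i j).Walk v v} (hp : p.IsCycle) :
    ∃ z, G.Adj p.snd z ∧ c z = γ := by
  obtain ⟨z, hzv, hz⟩ := hp.exists_adj_snd_ne
  refine ⟨z, hz.1, ?_⟩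
  have hcol := bicol_colour_eq_of_adj_of_adj hz (Walk.adj_snd hp.not_nil).symm
  rwa [update_of_ne hzv, update_self] at hcol

theorem exists_adj_colour_of_not_pGood_update [DecidableEq V] {c : V → Option (Fin 5)}
    (hc : pGood G c) {v x : V}
    (hx : ∀ u w, G.Adj v u → G.Adj v w → u ≠ w → (c u).isSome → c u = c w → x = u ∨ x = w)
    {k : Fin 5} (hk : ¬ pGood G (update c v (some k))) : ∃ z, G.Adj x z ∧ c z = some k := by
  obtain ⟨i, j, hij⟩ : ∃ i j : Fin 5, ¬ (bicol G (update c v (some k)) i j).IsAcyclic := by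
    simpa [pGood_iff] using hk
  obtain ⟨p, hp⟩ := exists_isCycle_of_not_isAcyclic_of_induce_compl hij
    (by rw [induce_compl_bicol_update]; exact (pGood_iff.1 hc i j).induce _)
  have hu := Walk.adj_snd hp.not_nil
  have hw := (Walk.adj_penultimate hp.not_nil).symm
  have hcol := bicol_colour_eq_of_adj_of_adj hu hw
  rw [update_of_ne hu.ne', update_of_ne hw.ne'] at hcol
  have hsome : (c p.snd).isSome := by
    obtain ⟨-, h | h⟩ := hu <;> rw [update_of_ne (Walk.adj_snd hp.not_nil).ne'] at h <;> simp [h.2]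
  rcases hx _ _ hu.1 hw.1 hp.snd_ne_penultimate hsome hcol with rfl | rfl
  · exact exists_adj_snd_colour_of_isCycle hp
  · simpa using exists_adj_snd_colour_of_isCycle hp.reverse

theorem card_add_one_le_ncard_neighborSet [Finite V] [Finite α] {c : V → Option α}
    {x v : V} (hv : c v = none) (hxv : G.Adj x v) (h : ∀ k, ∃ z, G.Adj x z ∧ c z = some k) :
    Nat.card α + 1 ≤ (G.neighborSet x).ncard := by
  choose f hadj hcol using h
  have hinj : f.Injective := fun a b e => Option.some.inj ((hcol a).symm.trans (e ▸ hcol b))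
  have hvf : v ∉ Set.range f := by
    rintro ⟨k, rfl⟩
    simp [hcol] at hv
  calc Nat.card α + 1 = (insert v (Set.range f)).ncard := by
        rw [Set.ncard_insert_of_notMem hvf, Set.ncard_range_of_injective hinj]
    _ ≤ (G.neighborSet x).ncard := by
        refine Set.ncard_le_ncard ?_ (Set.toFinite _)
        rintro z (rfl | ⟨k, rfl⟩)
        exacts [hxv, hadj k]

theorem eq_or_eq_of_adj_of_colour_eq {c : V → Option α} {v x y : V} {a : α}
    (hcy : c y = some a)
    (hother : ∀ u, G.Adj v u → u ≠ x → u ≠ y → ∀ b : α, c u = some b → b ≠ a)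
    (hdist : ∀ u w, G.Adj v u → G.Adj v w → u ≠ x → u ≠ y → w ≠ x → w ≠ y →
      (c u).isSome → c u = c w → u = w)
    {u w : V} (hu : G.Adj v u) (hw : G.Adj v w) (huw : u ≠ w) (hsome : (c u).isSome)
    (hcol : c u = c w) : x = u ∨ x = w := by
  by_contra! hxuw
  obtain ⟨hxu, hxw⟩ := hxuw
  obtain ⟨b, hb⟩ := Option.isSome_iff_exists.1 hsome
  obtain rfl | huy := eq_or_ne u y
  · exact hother w hw hxw.symm huw.symm a (hcol ▸ hcy) rfl
  obtain rfl | hwy := eq_or_ne w y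
  · exact hother u hu hxu.symm huy b hb (Option.some.inj (hb.symm.trans (hcol.trans hcy)))
  · exact huw (hdist u w hu hw hxu.symm huy hxw.symm hwy hsome hcol)

end Colouring

theorem stmt11_general {V : Type*} [Fintype V] [DecidableEq V] (G : SimpleGraph V)
    (hΔ : ∀ w : V, (G.neighborSet w).ncard ≤ 5)
    (c : V → Option (Fin 5)) (hc : pGood G c)
    (v x y : V) (a : Fin 5)
    (hv : c v = none) (hx : G.Adj v x)
    (hcy : c y = some a)
    (hother : ∀ u, G.Adj v u → u ≠ x → u ≠ y → ∀ b : Fin 5, c u = some b → b ≠ a)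
    (hdist : ∀ u w, G.Adj v u → G.Adj v w → u ≠ x → u ≠ y → w ≠ x → w ≠ y →
      (c u).isSome → c u = c w → u = w) :
    ∃ α : Fin 5, pGood G (Function.update c v (some α)) := by
  by_contra! hbad
  have hcount := card_add_one_le_ncard_neighborSet hv hx.symm fun α =>
    exists_adj_colour_of_not_pGood_update hc
      (fun _ _ => eq_or_eq_of_adj_of_colour_eq hcy hother hdist) (hbad α)
  have hdeg := hΔ x
  simp only [Nat.card_eq_fintype_card, Fintype.card_fin] at hcount
  omega

/-- Case 1 of the extension lemma: if an uncoloured vertex `v` has exactly two coloured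
neighbours `x, y` of the same colour and all other coloured neighbours have pairwise
distinct colours different from `c x`, then `v` can be coloured. -/
theorem stmt11 {V : Type*} [Fintype V] [DecidableEq V] (G : SimpleGraph V)
    (hΔ : ∀ w : V, (G.neighborSet w).ncard ≤ 5)
    (c : V → Option (Fin 5)) (hc : pGood G c)
    (v x y : V) (a : Fin 5)
    (hv : c v = none) (hx : G.Adj v x) (hy : G.Adj v y) (hxy : x ≠ y)
    (hcx : c x = some a) (hcy : c y = some a)
    (hother : ∀ u, G.Adj v u → u ≠ x → u ≠ y → ∀ b : Fin 5, c u = some b → b ≠ a)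
    (hdist : ∀ u w, G.Adj v u → G.Adj v w → u ≠ x → u ≠ y → w ≠ x → w ≠ y →
      (c u).isSome → c u = c w → u = w) :
    ∃ α : Fin 5, pGood G (Function.update c v (some α)) :=
  stmt11_general G hΔ c hc v x y a hv hx hcy hother hdist
end

section
/- Let c be a vertex colouring of a graph G constructed greedily so that at the moment each vertex v is coloured, v's colour differs from the colours of all vertices at distance exactly 2 from v that were already coloured (i.e., from the colours of coloured neighbours of v's uncoloured neighbours), and every already-coloured neighbour set of each uncoloured vertex is rainbow throughout the process. Then the resulting complete colouring contains no bichromatic alternating cycle; that is, every cycle of G receiving exactly two colours contains a monochromatic edge. -/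
lemma SimpleGraph.Walk.IsCycle.exists_two_adj_of_mem_support {V : Type*} {G : SimpleGraph V}
    {v m : V} {p : G.Walk v v} (hp : p.IsCycle) (hm : m ∈ p.support) :
    ∃ u w, u ≠ w ∧ G.Adj m u ∧ G.Adj m w ∧ u ∈ p.support ∧ w ∈ p.support := by
  classical
  have hq : (p.rotate m hm).IsCycle := hp.rotate hm
  refine ⟨_, _, hq.snd_ne_penultimate, adj_snd hq.not_nil, (adj_penultimate hq.not_nil).symm,
    ?_, ?_⟩ <;> exact (mem_support_rotate_iff p m hm).mp (getVert_mem_support _ _)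

lemma bicol_colour_eq_of_adj_of_adj_s12 {V α : Type*} {G : SimpleGraph V} {c : V → α} {a b : α}
    (hab : a ≠ b) {m u w : V} (hu : (bicol G c a b).Adj m u) (hw : (bicol G c a b).Adj m w) :
    c u = c w := by
  obtain ⟨-, hu⟩ := hu
  obtain ⟨-, hw⟩ := hw
  grind

theorem stmt12_general {V : Type*} (G : SimpleGraph V) (c : V → ℕ) (n : ℕ)
    (σ : Fin n ≃ V)
    (hrainbow : ∀ (i : Fin n) (u : V), (i : ℕ) ≤ ((σ.symm u : Fin n) : ℕ) →
      ∀ j k : Fin n, j < i → k < i → G.Adj u (σ j) → G.Adj u (σ k) →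
        c (σ j) = c (σ k) → j = k) :
    ∀ a b : ℕ, a ≠ b → (bicol G c a b).IsAcyclic := by
  classical
  intro a b hab v p hp
  obtain ⟨m, hm, hlast⟩ := p.support.toFinset.exists_max_image σ.symm ⟨v, by simp⟩
  obtain ⟨u, w, huw, hmu, hmw, hu, hw⟩ :=
    hp.exists_two_adj_of_mem_support (List.mem_toFinset.mp hm)
  have hearlier : ∀ x ∈ p.support, (bicol G c a b).Adj m x → σ.symm x < σ.symm m :=
    fun x hx hmx => (hlast x (List.mem_toFinset.mpr hx)).lt_of_ne
      (σ.symm.injective.ne hmx.ne.symm)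
  have hsame := hrainbow (σ.symm m) m le_rfl (σ.symm u) (σ.symm w)
    (hearlier u hu hmu) (hearlier w hw hmw) (by simpa using hmu.1) (by simpa using hmw.1)
    (by simpa using bicol_colour_eq_of_adj_of_adj_s12 hab hmu hmw)
  exact huw (σ.symm.injective hsame)

/-- If the vertices of `G` are coloured one at a time (in the order `σ 0, σ 1, …`) so that
each vertex receives a colour different from those of the already-coloured neighbours of its
uncoloured neighbours, and after each step every uncoloured vertex is rainbow, then the
final colouring has no alternating bichromatic cycle. -/
theorem stmt12 {V : Type*} [Fintype V] (G : SimpleGraph V) (c : V → ℕ) (n : ℕ)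
    (σ : Fin n ≃ V)
    (hdist2 : ∀ i j : Fin n, j < i → ∀ x : V,
      G.Adj (σ i) x → G.Adj x (σ j) → i < σ.symm x → c (σ j) ≠ c (σ i))
    (hrainbow : ∀ (i : Fin n) (u : V), (i : ℕ) ≤ ((σ.symm u : Fin n) : ℕ) →
      ∀ j k : Fin n, j < i → k < i → G.Adj u (σ j) → G.Adj u (σ k) →
        c (σ j) = c (σ k) → j = k) :
    ∀ a b : ℕ, a ≠ b → (bicol G c a b).IsAcyclic :=
  stmt12_general G c n σ hrainbow
end

section
/- Let G be a finite graph and let c be a partial colouring in which the coloured vertices were coloured one at a time. If v is an uncoloured vertex with exactly k coloured neighbours, chosen so that at every earlier step no uncoloured vertex ever had more coloured neighbours than v has now, then the coloured neighbours of v can be ordered v₁, …, v_k such that for each i = 2, …, k, the vertex v_i had at least i − 1 coloured neighbours at the moment it was coloured. -/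
/-- `u` is coloured before time `s` in the time-assignment `t`. -/
def ColouredAt {V : Type*} (t : V → Option ℕ) (s : ℕ) (u : V) : Prop :=
  ∃ m, t u = some m ∧ m < s

/-- If vertices are coloured one at a time, always colouring a vertex with at least as many
coloured neighbours as the uncoloured vertex `v` currently has, then the `k` coloured
neighbours of `v` can be ordered `v₁, …, v_k` by colouring time so that `v_i` had at least
`i - 1` coloured neighbours at the moment it was coloured. -/
theorem stmt15 {V : Type*} [Fintype V] (G : SimpleGraph V) (t : V → Option ℕ)
    (htinj : ∀ u w s, t u = some s → t w = some s → u = w)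
    (v : V) (hv : t v = none) (k : ℕ)
    (hk : {u | G.Adj v u ∧ (t u).isSome}.ncard = k)
    (hgreedy : ∀ u s, t u = some s →
      {x | G.Adj v x ∧ ColouredAt t s x}.ncard ≤ {x | G.Adj u x ∧ ColouredAt t s x}.ncard) :
    ∃ e : Fin k → V, Function.Injective e ∧
      Set.range e = {u | G.Adj v u ∧ (t u).isSome} ∧
      (∀ i j : Fin k, i < j → ∀ si sj, t (e i) = some si → t (e j) = some sj → si < sj) ∧
      (∀ (i : Fin k) (s : ℕ), t (e i) = some s →
        (i : ℕ) ≤ {x | G.Adj (e i) x ∧ ColouredAt t s x}.ncard) := by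
  classical
  have hne : Nonempty V := ⟨v⟩
  set S : Set V := {u | G.Adj v u ∧ (t u).isSome} with hS
  have hSfin : S.Finite := Set.toFinite _
  set F : Finset V := hSfin.toFinset with hF
  have hFcard : F.card = k := (Set.ncard_eq_toFinset_card S hSfin).symm.trans hk
  set f : V → ℕ := fun u => (t u).getD 0 with hf
  have hfspec : ∀ u ∈ F, t u = some (f u) := by
    intro u hu
    have h : (t u).isSome := (hSfin.mem_toFinset.mp hu).2
    obtain ⟨m, hm⟩ := Option.isSome_iff_exists.mp h
    simp [hf, hm]
  have hfinj : Set.InjOn f ↑F := by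
    intro u hu w hw h
    exact htinj u w (f u) (hfspec u hu) (h ▸ hfspec w hw)
  set T : Finset ℕ := F.image f with hT
  have hTcard : T.card = k := by
    rw [hT, Finset.card_image_of_injOn hfinj, hFcard]
  set σ := T.orderIsoOfFin hTcard with hσ
  set e : Fin k → V := fun i => Function.invFunOn f ↑F ↑(σ i) with he
  have hmem : ∀ i : Fin k, ∃ a ∈ (↑F : Set V), f a = ↑(σ i) := by
    intro i
    have h : (σ i : ℕ) ∈ T := (σ i).2
    obtain ⟨a, ha, hfa⟩ := Finset.mem_image.mp h
    exact ⟨a, by simpa using ha, hfa⟩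
  have heF : ∀ i, e i ∈ F := fun i => by
    simpa using Function.invFunOn_mem (hmem i)
  have hfe : ∀ i, f (e i) = ↑(σ i) := fun i => Function.invFunOn_eq (hmem i)
  have hte : ∀ i, t (e i) = some ↑(σ i) := fun i => by
    rw [hfspec _ (heF i), hfe]
  have heinj : Function.Injective e := by
    intro i j h
    have h2 : (σ i : ℕ) = ↑(σ j) := by rw [← hfe i, ← hfe j, h]
    exact σ.injective (Subtype.ext h2)
  refine ⟨e, heinj, ?_, ?_, ?_⟩
  · apply Set.eq_of_subset_of_ncard_le
    · rintro x ⟨i, rfl⟩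
      exact hSfin.mem_toFinset.mp (heF i)
    · rw [hk]
      have : Set.range e = e '' Set.univ := (Set.image_univ).symm
      rw [this, Set.ncard_image_of_injective _ heinj, Set.ncard_univ, Nat.card_eq_fintype_card,
        Fintype.card_fin]
    · exact hSfin
  · intro i j hij si sj hi hj
    have h1 : si = ↑(σ i) := Option.some.inj (hi.symm.trans (hte i))
    have h2 : sj = ↑(σ j) := Option.some.inj (hj.symm.trans (hte j))
    rw [h1, h2]
    exact Subtype.coe_lt_coe.mpr (σ.lt_iff_lt.mpr hij)
  · intro i s hs
    have hsσ : s = ↑(σ i) := Option.some.inj (hs.symm.trans (hte i))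
    have key : (i : ℕ) ≤ {x | G.Adj v x ∧ ColouredAt t s x}.ncard := by
      have hsub : e '' (Set.Iio i) ⊆ {x | G.Adj v x ∧ ColouredAt t s x} := by
        rintro x ⟨j, hj, rfl⟩
        refine ⟨(hSfin.mem_toFinset.mp (heF j)).1, ↑(σ j), hte j, ?_⟩
        rw [hsσ]
        exact Subtype.coe_lt_coe.mpr (σ.lt_iff_lt.mpr hj)
      have hfin : {x | G.Adj v x ∧ ColouredAt t s x}.Finite := Set.toFinite _
      have hcard : (e '' (Set.Iio i)).ncard = (i : ℕ) := by
        rw [Set.ncard_image_of_injective _ heinj, ← Finset.coe_Iio,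
          Set.ncard_coe_finset, Fin.card_Iio]
      calc (i : ℕ) = (e '' (Set.Iio i)).ncard := hcard.symm
        _ ≤ _ := Set.ncard_le_ncard hsub hfin
    exact key.trans (hgreedy (e i) s hs)
end
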